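/- arXiv:0705.0326 — 3 statements merged into one kernel-verified Lean document; each statement's English description precedes it below -/
import Mathlib

section
/- For every δ ∈ (0,1) and all functions m, h : ℕ → ℕ satisfying 1 ≤ h(n) ≤ m(n) for all n, there exists n₀ such that for all n ≥ n₀ the following holds. Consider the random process in which, in each of n independent rounds, a subset of h(n) distinct bins out of m(n) bins is chosen uniformly at random and one ball is dropped into each chosen bin. Let N₁ be the number of bins containing at least one ball after the n rounds and let p̃₁ = 1 − exp(−n·h(n)/m(n)). Then Pr( N₁ ≤ (1−δ)·m(n)·p̃₁ ) ≤ 2·exp( −δ²·m(n)·p̃₁ / 3 ). -/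
open MeasureTheory ProbabilityTheory
open scoped ENNReal

instance (n : ℕ) : MeasurableSpace (Finset (Fin n)) := ⊤

/-- The outcome of one round of the balls-and-bins process: a uniformly random subset of
`h` distinct bins out of the `m` bins `Fin m` (possible since `h ≤ m`). -/
noncomputable def roundPMF (m h : ℕ) (hhm : h ≤ m) : PMF (Finset (Fin m)) :=
  PMF.uniformOfFinset (Finset.univ.filter fun s => s.card = h)
    (by
      obtain ⟨t, -, ht⟩ :=
        Finset.exists_subset_card_eq (s := (Finset.univ : Finset (Fin m))) (n := h)
          (by simpa using hhm)
      exact ⟨t, by simp [ht]⟩)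

/-!
The bins left empty are negatively correlated: a set `T` of bins stays empty in one round with
probability `C(m - |T|, h) / C(m, h) ≤ (1 - h/m)^|T|`, hence in all `n` rounds with probability
at most `q^|T|`, where `q = (1 - h/m)^n ≤ exp (-n h / m) = 1 - p̃₁`. Writing
`exp (-δ N₁) = ∏_b (exp (-δ) + (1 - exp (-δ)) [b empty])` and expanding the product over the
sets of empty bins bounds the moment generating function of `N₁` at `-δ`, as for a binomial
count with success probability `p̃₁`, by `((1 - exp (-δ)) q + exp (-δ))^m`, which is at most
`exp (-(1 - exp (-δ)) m p̃₁)`. The exponential Markov inequality and `exp (-δ) ≤ 1 - δ + δ²/2`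
then give `Pr (N₁ ≤ (1 - δ) m p̃₁) ≤ exp (-δ² m p̃₁ / 2)`.
-/

open Finset Real

theorem Real.exp_neg_le_one_sub_add_sq_div_two {t : ℝ} (ht : 0 ≤ t) :
    exp (-t) ≤ 1 - t + t ^ 2 / 2 := by
  let f : ℝ → ℝ := fun x => 1 - x + x ^ 2 / 2 - exp (-x)
  have hf : ∀ x, HasDerivAt f (-1 + x + exp (-x)) x := by
    intro x
    refine ((((hasDerivAt_id' x).const_sub 1).add ((hasDerivAt_pow 2 x).div_const 2)).sub
      (hasDerivAt_neg' x).exp).congr_deriv ?_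
    push_cast; ring
  have hmono : MonotoneOn f (Set.Ici 0) :=
    monotoneOn_of_deriv_nonneg (convex_Ici 0)
      (fun x _ => (hf x).continuousAt.continuousWithinAt)
      (fun x _ => (hf x).differentiableAt.differentiableWithinAt)
      (fun x _ => by rw [(hf x).deriv]; linarith [add_one_le_exp (-x)])
  simpa [f] using hmono Set.self_mem_Ici ht ht

theorem Nat.choose_pred_mul_le_choose_mul_sub {M H j : ℕ} (hj : j ≤ M) :
    (j - 1).choose H * M ≤ j.choose H * (M - H) := by
  cases j with
  | zero => cases H <;> simp
  | succ i =>
    have hsucc := Nat.choose_mul_succ_eq i H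
    have hlin : (i + 1 - H) * M ≤ (M - H) * (i + 1) := by
      rcases le_or_gt H (i + 1) with h | h
      · zify [h, h.trans hj]; nlinarith
      · simp [Nat.sub_eq_zero_of_le h.le]
    refine Nat.le_of_mul_le_mul_right ?_ i.succ_pos
    calc (i + 1 - 1).choose H * M * (i + 1) = (i + 1).choose H * ((i + 1 - H) * M) := by
          rw [Nat.add_sub_cancel, mul_right_comm, hsucc, mul_assoc]
      _ ≤ (i + 1).choose H * ((M - H) * (i + 1)) := Nat.mul_le_mul_left _ hlin
      _ = (i + 1).choose H * (M - H) * (i + 1) := by ring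

theorem Nat.choose_sub_mul_pow_le (M H k : ℕ) :
    (M - k).choose H * M ^ k ≤ M.choose H * (M - H) ^ k := by
  induction k with
  | zero => simp
  | succ k ih =>
    have hstep : (M - (k + 1)).choose H * M ≤ (M - k).choose H * (M - H) := by
      simpa [Nat.sub_sub] using Nat.choose_pred_mul_le_choose_mul_sub (H := H) (M.sub_le k)
    calc (M - (k + 1)).choose H * M ^ (k + 1)
        = (M - (k + 1)).choose H * M * M ^ k := by ring
      _ ≤ (M - k).choose H * (M - H) * M ^ k := Nat.mul_le_mul_right _ hstep
      _ = (M - k).choose H * M ^ k * (M - H) := by ring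
      _ ≤ M.choose H * (M - H) ^ k * (M - H) := Nat.mul_le_mul_right _ ih
      _ = M.choose H * (M - H) ^ (k + 1) := by ring

theorem choose_sub_div_choose_le {M H : ℕ} (hHM : H ≤ M) (k : ℕ) :
    ((M - k).choose H : ℝ) / M.choose H ≤ (1 - H / M) ^ k := by
  have hC : (0 : ℝ) < M.choose H := by exact_mod_cast Nat.choose_pos hHM
  obtain rfl | hM := M.eq_zero_or_pos
  · obtain rfl : H = 0 := Nat.le_zero.mp hHM
    simp
  have hMH : (1 - H / M : ℝ) = (M - H : ℕ) / M := by
    rw [Nat.cast_sub hHM]; field_simp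
  rw [hMH, div_pow, div_le_div_iff₀ hC (by positivity), mul_comm _ (M.choose H : ℝ)]
  exact_mod_cast Nat.choose_sub_mul_pow_le M H k

theorem one_sub_natCast_div_nonneg {H M : ℕ} (hHM : H ≤ M) : (0 : ℝ) ≤ 1 - H / M :=
  sub_nonneg.2 (div_le_one_of_le₀ (by exact_mod_cast hHM) (Nat.cast_nonneg M))

theorem one_sub_div_pow_le_exp {H M : ℕ} (hHM : H ≤ M) (N : ℕ) :
    (1 - H / M : ℝ) ^ N ≤ exp (-(N * H) / M) := by
  calc (1 - H / M : ℝ) ^ N ≤ exp (-(H / M)) ^ N :=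
        pow_le_pow_left₀ (one_sub_natCast_div_nonneg hHM) (one_sub_le_exp_neg _) N
    _ = exp (-(N * H) / M) := by rw [← exp_nat_mul]; ring_nf

theorem card_filter_card_eq_and_disjoint {α : Type*} [Fintype α] [DecidableEq α] (H : ℕ)
    (T : Finset α) :
    #{u : Finset α | #u = H ∧ Disjoint T u} = (Fintype.card α - #T).choose H := by
  have hfilter : ({u : Finset α | #u = H ∧ Disjoint T u} : Finset (Finset α))
      = powersetCard H Tᶜ := by
    ext u
    simp [mem_powersetCard, subset_compl_iff_disjoint_left, and_comm]
  rw [hfilter, card_powersetCard, card_compl]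

theorem integral_prod_mul_add_le {Ω ι : Type*} [Fintype Ω] [MeasurableSpace Ω]
    [MeasurableSingletonClass Ω] [Fintype ι] {μ : Measure Ω} [IsFiniteMeasure μ]
    (Y : ι → Ω → ℝ) {a c q : ℝ} (ha : 0 ≤ a) (hc : 0 ≤ c)
    (hY : ∀ T : Finset ι, ∫ ω, ∏ b ∈ T, Y b ω ∂μ ≤ q ^ #T) :
    ∫ ω, ∏ b, (c * Y b ω + a) ∂μ ≤ (c * q + a) ^ Fintype.card ι := by
  classical
  have hexpand : ∀ ω, ∏ b, (c * Y b ω + a)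
      = ∑ T ∈ univ.powerset, c ^ #T * a ^ (#(univ : Finset ι) - #T) * ∏ b ∈ T, Y b ω := by
    intro ω
    rw [prod_add]
    refine sum_congr rfl fun T _ => ?_
    rw [prod_mul_distrib, prod_const, prod_const, card_sdiff_of_subset (subset_univ T)]
    ring
  calc ∫ ω, ∏ b, (c * Y b ω + a) ∂μ
      = ∑ T ∈ univ.powerset,
          c ^ #T * a ^ (#(univ : Finset ι) - #T) * ∫ ω, ∏ b ∈ T, Y b ω ∂μ := by
        simp_rw [hexpand]
        rw [integral_finsetSum _ fun _ _ => Integrable.of_finite]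
        simp_rw [integral_const_mul]
    _ ≤ ∑ T ∈ univ.powerset, c ^ #T * a ^ (#(univ : Finset ι) - #T) * q ^ #T := by
        gcongr with T; exact hY T
    _ = (c * q + a) ^ Fintype.card ι := by
        rw [← card_univ, ← sum_pow_mul_eq_add_pow]
        refine sum_congr rfl fun T _ => by ring

theorem exp_neg_mul_card_eq_prod {α : Type*} [Fintype α] [DecidableEq α] (S : Finset α)
    (s : ℝ) :
    exp (-s * #S) = ∏ b, ((1 - exp (-s)) * (if b ∉ S then 1 else 0) + exp (-s)) := by
  have hfactor : ∀ b, (1 - exp (-s)) * (if b ∉ S then 1 else 0) + exp (-s)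
      = if b ∈ S then exp (-s) else 1 := fun b => by split_ifs <;> ring
  rw [prod_congr rfl fun b _ => hfactor b, prod_ite_mem, univ_inter, prod_const,
    ← exp_nat_mul, mul_comm]

def occupiedBins {N : ℕ} {α : Type*} [Fintype α] [DecidableEq α] (ω : Fin N → Finset α) :
    Finset α :=
  {b | ∃ t, b ∈ ω t}

theorem integral_prod_notMem_occupiedBins {N : ℕ} {α : Type*} [Fintype α] [DecidableEq α]
    [MeasurableSpace (Finset α)] (ν : Measure (Finset α)) [SigmaFinite ν] (T : Finset α) :
    ∫ ω, ∏ b ∈ T, (if b ∉ occupiedBins ω then (1 : ℝ) else 0) ∂(Measure.pi fun _ : Fin N => ν)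
      = (∫ u, (if Disjoint T u then (1 : ℝ) else 0) ∂ν) ^ N := by
  have hfubini := integral_fintype_prod_eq_pow (ι := Fin N) (μ := ν)
    fun u => if Disjoint T u then (1 : ℝ) else 0
  rw [Fintype.card_fin] at hfubini
  rw [← hfubini]
  congr 1 with ω
  rw [prod_boole, prod_boole]
  simp only [occupiedBins, mem_filter, mem_univ, true_and, not_exists, disjoint_left,
    forall_const]
  exact if_congr ⟨fun h t b hb => h b hb t, fun h b hb t => h t hb⟩ rfl rfl

theorem integral_disjoint_roundPMF (M H : ℕ) (hHM : H ≤ M) (T : Finset (Fin M)) :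
    ∫ u, (if Disjoint T u then (1 : ℝ) else 0) ∂(roundPMF M H hHM).toMeasure
      = ((M - #T).choose H : ℝ) / M.choose H := by
  rw [PMF.integral_eq_sum]
  simp only [roundPMF, PMF.uniformOfFinset_apply, smul_eq_mul]
  have hcard := card_filter_card_eq_and_disjoint H (∅ : Finset (Fin M))
  simp only [disjoint_empty_left, and_true, card_empty, Fintype.card_fin, Nat.sub_zero] at hcard
  simp only [mem_filter, mem_univ, true_and, hcard, apply_ite ENNReal.toReal, ENNReal.toReal_inv,
    ENNReal.toReal_natCast, ENNReal.toReal_zero, ite_zero_mul_ite_zero, mul_one]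
  rw [← sum_filter, sum_const, nsmul_eq_mul, card_filter_card_eq_and_disjoint, Fintype.card_fin,
    div_eq_mul_inv]

theorem mgf_neg_card_occupiedBins_le (N M H : ℕ) (hHM : H ≤ M) {s : ℝ} (hs : 0 ≤ s) :
    mgf (fun ω => (#(occupiedBins ω) : ℝ))
        (Measure.pi fun _ : Fin N => (roundPMF M H hHM).toMeasure) (-s)
      ≤ ((1 - exp (-s)) * (1 - H / M) ^ N + exp (-s)) ^ M := by
  have hc : 0 ≤ 1 - exp (-s) := sub_nonneg.2 (exp_le_one_iff.2 (neg_nonpos.2 hs))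
  simp only [mgf, exp_neg_mul_card_eq_prod]
  refine (integral_prod_mul_add_le _ (exp_pos _).le hc fun T => ?_).trans_eq
    (by rw [Fintype.card_fin])
  rw [integral_prod_notMem_occupiedBins, integral_disjoint_roundPMF,
    ← pow_mul, mul_comm, pow_mul]
  exact pow_le_pow_left₀ (by positivity) (choose_sub_div_choose_le hHM _) N

theorem exp_mul_pow_le_exp_neg_sq {δ p q : ℝ} (hδ : 0 ≤ δ) (hp : 0 ≤ p) (hq : 0 ≤ q)
    (hqp : q ≤ 1 - p) (M : ℕ) :
    exp (δ * ((1 - δ) * M * p)) * ((1 - exp (-δ)) * q + exp (-δ)) ^ M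
      ≤ exp (-δ ^ 2 * M * p / 2) := by
  set c := 1 - exp (-δ)
  have hc : δ - δ ^ 2 / 2 ≤ c := by
    linarith [exp_neg_le_one_sub_add_sq_div_two hδ]
  have hc0 : 0 ≤ c := sub_nonneg.2 (exp_le_one_iff.2 (neg_nonpos.2 hδ))
  have hbase : c * q + exp (-δ) ≤ exp (-(c * p)) := by
    have := mul_le_mul_of_nonneg_left hqp hc0
    linarith [one_sub_le_exp_neg (c * p)]
  have hexponent : δ * ((1 - δ) * M * p) + M * -(c * p) ≤ -δ ^ 2 * M * p / 2 := by
    have := mul_le_mul_of_nonneg_left hc (mul_nonneg (Nat.cast_nonneg M) hp)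
    nlinarith
  calc exp (δ * ((1 - δ) * M * p)) * (c * q + exp (-δ)) ^ M
      ≤ exp (δ * ((1 - δ) * M * p)) * exp (-(c * p)) ^ M := by
        gcongr
    _ ≤ exp (-δ ^ 2 * M * p / 2) := by
        rw [← exp_nat_mul, ← exp_add]
        exact exp_le_exp.2 hexponent

theorem stmt_0_general (δ : ℝ) (hδ0 : 0 < δ) (m h : ℕ → ℕ) (hhm : ∀ n, h n ≤ m n) :
    ∃ n₀ : ℕ, ∀ n, n₀ ≤ n →
      (Measure.pi fun _ : Fin n => (roundPMF (m n) (h n) (hhm n)).toMeasure)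
        {ω | ((Finset.univ.filter fun b : Fin (m n) => ∃ t, b ∈ ω t).card : ℝ) ≤
              (1 - δ) * (m n) * (1 - Real.exp (-((n : ℝ) * (h n)) / (m n)))}
        ≤ ENNReal.ofReal
            (2 * Real.exp
              (-δ ^ 2 * (m n) * (1 - Real.exp (-((n : ℝ) * (h n)) / (m n))) / 3)) := by
  refine ⟨0, fun n _ => ?_⟩
  set μ := Measure.pi fun _ : Fin n => (roundPMF (m n) (h n) (hhm n)).toMeasure
  set p := 1 - exp (-((n : ℝ) * (h n)) / (m n))
  have hp : 0 ≤ p := sub_nonneg.2 (exp_le_one_iff.2 (by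
    rw [neg_div]; exact neg_nonpos.2 (by positivity)))
  have hq : (1 - h n / m n : ℝ) ^ n ≤ 1 - p := by
    simpa [p] using one_sub_div_pow_le_exp (hhm n) n
  have hchernoff := measure_le_le_exp_mul_mgf (X := fun ω => (#(occupiedBins ω) : ℝ))
    ((1 - δ) * m n * p) (neg_nonpos.2 hδ0.le) (μ := μ) Integrable.of_finite
  rw [← ofReal_measureReal]
  refine ENNReal.ofReal_le_ofReal ?_
  change μ.real {ω | (#(occupiedBins ω) : ℝ) ≤ (1 - δ) * m n * p} ≤ _
  calc _ ≤ _ := hchernoff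
    _ ≤ exp (δ * ((1 - δ) * m n * p)) *
          ((1 - exp (-δ)) * (1 - h n / m n) ^ n + exp (-δ)) ^ m n := by
        rw [neg_neg]
        exact mul_le_mul_of_nonneg_left
          (mgf_neg_card_occupiedBins_le n (m n) (h n) (hhm n) hδ0.le) (exp_pos _).le
    _ ≤ exp (-δ ^ 2 * m n * p / 2) := exp_mul_pow_le_exp_neg_sq hδ0.le hp
        (pow_nonneg (one_sub_natCast_div_nonneg (hhm n)) n) hq (m n)
    _ ≤ 2 * exp (-δ ^ 2 * m n * p / 3) := by
        have hμ : 0 ≤ δ ^ 2 * m n * p := by positivity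
        have := exp_le_exp.2 (show -δ ^ 2 * m n * p / 2 ≤ -δ ^ 2 * m n * p / 3 by linarith)
        linarith [exp_pos (-δ ^ 2 * m n * p / 3)]

/-- Balls and bins: in each of `n` independent rounds a uniformly random set
of `h n` distinct bins (out of `m n` bins) each receive a ball.  `N₁` is the number of bins with
at least one ball, and `p̃₁ = 1 - exp (- n * h n / m n)`.  For every `δ ∈ (0,1)` and all
sufficiently large `n`, `Pr (N₁ ≤ (1 - δ) * m n * p̃₁) ≤ 2 * exp (- δ² * m n * p̃₁ / 3)`. -/
theorem stmt_0 (δ : ℝ) (hδ0 : 0 < δ) (hδ1 : δ < 1) (m h : ℕ → ℕ)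
    (hh : ∀ n, 1 ≤ h n) (hhm : ∀ n, h n ≤ m n) :
    ∃ n₀ : ℕ, ∀ n, n₀ ≤ n →
      (Measure.pi fun _ : Fin n => (roundPMF (m n) (h n) (hhm n)).toMeasure)
        {ω | ((Finset.univ.filter fun b : Fin (m n) => ∃ t, b ∈ ω t).card : ℝ) ≤
              (1 - δ) * (m n) * (1 - Real.exp (-((n : ℝ) * (h n)) / (m n)))}
        ≤ ENNReal.ofReal
            (2 * Real.exp
              (-δ ^ 2 * (m n) * (1 - Real.exp (-((n : ℝ) * (h n)) / (m n))) / 3)) :=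
  stmt_0_general δ hδ0 m h hhm
end

section
/- For every δ ∈ (0,1), every function m : ℕ → ℕ with m(n) ≥ 1, and every function p : ℕ → (0,1], there exists n₀ such that for all n ≥ n₀ the following holds. Suppose n balls are dropped independently into m(n) bins and one trash can, where each ball lands in the trash can with probability 1 − p(n) and lands in each particular bin with probability p(n)/m(n). Let N₂ be the number of bins containing at least one ball and let p̃₂ = 1 − exp(−n·p(n)/m(n)). Then Pr( N₂ ≤ (1−δ)·m(n)·p̃₂ ) ≤ 2·exp( −δ²·m(n)·p̃₂ / 3 ). -/
/-!
Let `E` be the number of empty bins. A fixed set `S` of bins is entirely empty with probability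
`(1 - |S| p / m)ⁿ ≤ exp (-n p / m) ^ |S| = (1 - p̃₂) ^ |S|`. Expanding `(1 + c) ^ E` as
`∑_S c ^ |S| 𝟙[all bins of S empty]` therefore bounds the exponential moments of `E` by those of a
binomial variable, `𝔼 (1 + c) ^ E ≤ (1 + c (1 - p̃₂)) ^ m`, although the bins are not independent.
Chernoff's method with the optimal `c` then bounds the lower tail of `N₂ = m - E` by
`exp (-m · KL((1 - δ) p̃₂ ‖ p̃₂)) ≤ exp (-δ² m p̃₂ / 2)`.
-/

open MeasureTheory ProbabilityTheory
open scoped ENNReal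

instance (n : ℕ) : MeasurableSpace (Option (Fin n)) := ⊤

/-- The distribution of the location of a single ball: with probability `1 - p` it lands in the
trash can (`none`), and with probability `p / m` it lands in each particular bin (`some b`). -/
noncomputable def ballPMF (m : ℕ) [NeZero m] (p : ℝ≥0∞) (hp : p ≤ 1) : PMF (Option (Fin m)) :=
  (PMF.bernoulli p.toNNReal (by simpa using ENNReal.toNNReal_mono ENNReal.one_ne_top hp)).bind fun b =>
    if b then (PMF.uniformOfFintype (Fin m)).map some else PMF.pure none

section Chernoff

open Finset Real

theorem Real.sq_sub_one_div_two_le_mul_log {y : ℝ} (hy0 : 0 < y) (hy1 : y ≤ 1) :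
    (y ^ 2 - 1) / 2 ≤ y * log y := by
  have hsinh : (y - y⁻¹) / 2 ≤ log y := sinh_log hy0 ▸ sinh_le_self_iff.2 (log_nonpos hy0.le hy1)
  calc (y ^ 2 - 1) / 2 = y * ((y - y⁻¹) / 2) := by field_simp
    _ ≤ y * log y := mul_le_mul_of_nonneg_left hsinh hy0.le

/-- The right-hand side is the Kullback–Leibler divergence of `Bernoulli ((1 - δ) q)` from
`Bernoulli q`. -/
theorem sq_mul_div_two_le_bernoulli_kl {δ q : ℝ} (hδ0 : 0 ≤ δ) (hδ1 : δ < 1) (hq0 : 0 ≤ q)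
    (hq1 : q < 1) :
    δ ^ 2 * q / 2 ≤
      (1 - δ) * q * log (1 - δ) + (1 - (1 - δ) * q) * log ((1 - (1 - δ) * q) / (1 - q)) := by
  have hb : 0 < 1 - q := by linarith
  have ha : 0 < 1 - (1 - δ) * q := by nlinarith
  have hfirst : (1 - δ) * q * log (1 - δ) ≥ q * (δ ^ 2 / 2 - δ) := by
    have := mul_le_mul_of_nonneg_left
      (Real.sq_sub_one_div_two_le_mul_log (y := 1 - δ) (by linarith) (by linarith)) hq0
    linarith
  have hsecond : δ * q ≤ (1 - (1 - δ) * q) * log ((1 - (1 - δ) * q) / (1 - q)) := by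
    have := one_sub_inv_le_log_of_pos (div_pos ha hb)
    rw [inv_div] at this
    calc δ * q = (1 - (1 - δ) * q) * (1 - (1 - q) / (1 - (1 - δ) * q)) := by
          rw [mul_sub, mul_one, mul_div_cancel₀ _ ha.ne']; ring
      _ ≤ _ := mul_le_mul_of_nonneg_left this ha.le
  linarith

variable {Ω ι : Type*} [MeasurableSpace Ω] [Fintype ι] {μ : Measure Ω}

theorem measurable_card_filter_mem {A : ι → Set Ω} [∀ ω, DecidablePred (ω ∈ A ·)]
    (hA : ∀ i, MeasurableSet (A i)) : Measurable fun ω => #{i | ω ∈ A i} := by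
  simp_rw [card_filter]
  exact Finset.measurable_sum _ fun i _ => Measurable.ite (hA i) measurable_const measurable_const

theorem lintegral_pow_card_mem_le {A : ι → Set Ω} [∀ ω, DecidablePred (ω ∈ A ·)]
    (hA : ∀ i, MeasurableSet (A i)) {r : ℝ≥0∞}
    (hr : ∀ S : Finset ι, μ (⋂ i ∈ S, A i) ≤ r ^ #S) (c : ℝ≥0∞) :
    ∫⁻ ω, (1 + c) ^ #{i | ω ∈ A i} ∂μ ≤ (1 + c * r) ^ Fintype.card ι := by
  have hexpand (ω : Ω) : (1 + c) ^ #{i | ω ∈ A i} =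
      ∑ S ∈ univ.powerset, (⋂ i ∈ S, A i).indicator (fun _ => c ^ #S) ω := by
    have hfactor (i : ι) :
        (if ω ∈ A i then 1 + c else 1) = 1 + (A i).indicator (fun _ => c) ω := by
      by_cases h : ω ∈ A i <;> simp [h]
    rw [← prod_const, prod_filter]
    simp_rw [hfactor, prod_one_add, prod_indicator_const_apply]
    rfl
  have hmeas (S : Finset ι) : MeasurableSet (⋂ i ∈ S, A i) :=
    S.measurableSet_biInter fun i _ => hA i
  calc ∫⁻ ω, (1 + c) ^ #{i | ω ∈ A i} ∂μ
      = ∑ S ∈ univ.powerset, c ^ #S * μ (⋂ i ∈ S, A i) := by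
        simp_rw [hexpand]
        rw [lintegral_finsetSum _ fun S _ => measurable_const.indicator (hmeas S)]
        simp_rw [lintegral_indicator_const (hmeas _)]
    _ ≤ ∑ S ∈ univ.powerset, (c * r) ^ #S * 1 ^ (#univ - #S) :=
        sum_le_sum fun S _ => by
          rw [one_pow, mul_one, mul_pow]
          exact mul_le_mul_right (hr S) _
    _ = (1 + c * r) ^ Fintype.card ι := by
        rw [sum_pow_mul_eq_add_pow, add_comm, card_univ]

theorem measure_card_mem_le_le_exp {B : ι → Set Ω} [∀ ω, DecidablePred (ω ∈ B ·)]
    (hB : ∀ i, MeasurableSet (B i)) {δ q : ℝ} (hδ0 : 0 ≤ δ) (hδ1 : δ < 1) (hq0 : 0 ≤ q)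
    (hq1 : q < 1) (hr : ∀ S : Finset ι, μ (⋂ i ∈ S, (B i)ᶜ) ≤ ENNReal.ofReal (1 - q) ^ #S) :
    μ {ω | (#{i | ω ∈ B i} : ℝ) ≤ (1 - δ) * Fintype.card ι * q}
      ≤ ENNReal.ofReal (exp (-(δ ^ 2 * Fintype.card ι * q / 2))) := by
  set M := Fintype.card ι
  set a := 1 - (1 - δ) * q
  -- `log x` is the optimal Chernoff parameter for this tail of a binomial count.
  set x := a / ((1 - q) * (1 - δ))
  have hb : 0 < 1 - q := by linarith
  have hd : 0 < 1 - δ := by linarith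
  have ha : 0 < a := by nlinarith
  have hx1 : 1 ≤ x := by rw [le_div_iff₀ (by positivity)]; nlinarith
  have hx : 1 + (x - 1) * (1 - q) = (1 - δ)⁻¹ := by simp only [x, a]; field_simp; ring
  set ε := ENNReal.ofReal (exp (M * a * log x))
  have hmoment : ∫⁻ ω, ENNReal.ofReal x ^ #{i | ω ∈ (B i)ᶜ} ∂μ
      ≤ ENNReal.ofReal ((1 - δ)⁻¹ ^ M) := by
    have := lintegral_pow_card_mem_le (A := fun i => (B i)ᶜ) (fun i => (hB i).compl) hr
      (ENNReal.ofReal (x - 1))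
    rwa [← ENNReal.ofReal_one, ← ENNReal.ofReal_mul (by linarith),
      ← ENNReal.ofReal_add zero_le_one (by linarith), ← ENNReal.ofReal_add zero_le_one
      (by nlinarith), add_sub_cancel, hx, ← ENNReal.ofReal_pow (by positivity)] at this
  have hsub : {ω | (#{i | ω ∈ B i} : ℝ) ≤ (1 - δ) * M * q}
      ⊆ {ω | ε ≤ ENNReal.ofReal x ^ #{i | ω ∈ (B i)ᶜ}} := by
    intro ω hω
    have hcount : (#{i | ω ∈ (B i)ᶜ} : ℝ) = M - #{i | ω ∈ B i} := by
      have := card_filter_add_card_filter_not (s := univ) (fun i => ω ∈ B i)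
      rw [card_univ] at this
      rw [eq_sub_iff_add_eq']
      exact_mod_cast this
    rw [Set.mem_ofPred_eq, ← ENNReal.ofReal_pow (by linarith),
      ← exp_log (pow_pos (by linarith) _), log_pow]
    refine ENNReal.ofReal_le_ofReal (exp_le_exp.2 (mul_le_mul_of_nonneg_right ?_ (log_nonneg hx1)))
    rw [hcount]
    simp only [Set.mem_ofPred_eq] at hω
    linarith
  have hexponent : (1 - δ)⁻¹ ^ M / exp (M * a * log x)
      = exp (-(M * ((1 - δ) * q * log (1 - δ) + a * log (a / (1 - q))))) := by
    rw [← exp_log (pow_pos (inv_pos.2 hd) M), ← exp_sub, log_pow, log_inv, log_div ha.ne' hb.ne',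
      log_div ha.ne' (by positivity), log_mul hb.ne' hd.ne']
    congr 1
    ring
  calc μ {ω | (#{i | ω ∈ B i} : ℝ) ≤ (1 - δ) * M * q}
      ≤ (∫⁻ ω, ENNReal.ofReal x ^ #{i | ω ∈ (B i)ᶜ} ∂μ) / ε :=
        (measure_mono hsub).trans (meas_ge_le_lintegral_div
          (measurable_const.pow (measurable_card_filter_mem fun i => (hB i).compl)).aemeasurable
          (by positivity) (by simp [ε]))
    _ ≤ ENNReal.ofReal ((1 - δ)⁻¹ ^ M / exp (M * a * log x)) := by
        rw [ENNReal.ofReal_div_of_pos (exp_pos _)]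
        gcongr
    _ ≤ _ := by
        rw [hexponent]
        gcongr
        have := sq_mul_div_two_le_bernoulli_kl hδ0 hδ1 hq0 hq1
        nlinarith

end Chernoff

theorem ENNReal.one_sub_le_ofReal_exp_neg_toReal (x : ℝ≥0∞) :
    1 - x ≤ ENNReal.ofReal (Real.exp (-x.toReal)) := by
  rcases le_or_gt x 1 with hx | hx
  · rw [← ENNReal.ofReal_toReal (ne_top_of_le_ne_top ENNReal.one_ne_top hx), ← ENNReal.ofReal_one,
      ← ENNReal.ofReal_sub _ ENNReal.toReal_nonneg, ENNReal.toReal_ofReal ENNReal.toReal_nonneg]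
    exact ENNReal.ofReal_le_ofReal (by linarith [Real.add_one_le_exp (-x.toReal)])
  · simp [tsub_eq_zero_of_le hx.le]

theorem ballPMF_apply_some (m : ℕ) [NeZero m] (p : ℝ≥0∞) (hp : p ≤ 1) (b : Fin m) :
    ballPMF m p hp (some b) = p / m := by
  have hp' : (p.toNNReal : ℝ≥0∞) = p :=
    ENNReal.coe_toNNReal (ne_top_of_le_ne_top ENNReal.one_ne_top hp)
  simp [ballPMF, PMF.bind_apply, PMF.map_apply, PMF.bernoulli, hp',
    ENNReal.div_eq_inv_mul, mul_comm]

theorem toMeasure_ballPMF_forall_ne_some (m : ℕ) [NeZero m] (p : ℝ≥0∞) (hp : p ≤ 1)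
    (S : Finset (Fin m)) :
    (ballPMF m p hp).toMeasure {o | ∀ b ∈ S, o ≠ some b} = 1 - S.card * (p / m) := by
  have hS : {o | ∀ b ∈ S, o ≠ some b} = ((S.map .some : Finset (Option (Fin m))) : Set _)ᶜ := by
    ext o
    simp [eq_comm]
  rw [hS, prob_compl_eq_one_sub (S.map _).measurableSet, PMF.toMeasure_apply_finset,
    Finset.sum_map]
  simp [ballPMF_apply_some]

theorem measure_pi_ballPMF_biInter_compl (n m : ℕ) [NeZero m] (p : ℝ≥0∞) (hp : p ≤ 1)
    (S : Finset (Fin m)) :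
    Measure.pi (fun _ : Fin n => (ballPMF m p hp).toMeasure) (⋂ b ∈ S, {ω | ∃ t, ω t = some b}ᶜ)
      = (1 - S.card * (p / m)) ^ n := by
  have hS : (⋂ b ∈ S, {ω : Fin n → Option (Fin m) | ∃ t, ω t = some b}ᶜ)
      = Set.univ.pi fun _ => {o | ∀ b ∈ S, o ≠ some b} := by
    ext ω
    simp only [Set.mem_iInter, Set.mem_compl_iff, Set.mem_ofPred_eq, not_exists, Set.mem_pi,
      Set.mem_univ, true_implies]
    exact ⟨fun h t b hb => h b hb t, fun h b hb t => h t b hb⟩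
  rw [hS, Measure.pi_pi, Finset.prod_const, Finset.card_univ, Fintype.card_fin,
    toMeasure_ballPMF_forall_ne_some]

theorem measure_pi_ballPMF_biInter_compl_le (n m : ℕ) [NeZero m] {P : ℝ} (hP : 0 ≤ P)
    (hp : ENNReal.ofReal P ≤ 1) (S : Finset (Fin m)) :
    Measure.pi (fun _ : Fin n => (ballPMF m (ENNReal.ofReal P) hp).toMeasure)
        (⋂ b ∈ S, {ω | ∃ t, ω t = some b}ᶜ)
      ≤ ENNReal.ofReal (Real.exp (-(n * P) / m)) ^ S.card := by
  rw [measure_pi_ballPMF_biInter_compl, ← ENNReal.ofReal_pow (Real.exp_pos _).le,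
    ← Real.exp_nat_mul]
  calc (1 - S.card * (ENNReal.ofReal P / m)) ^ n
      ≤ ENNReal.ofReal (Real.exp (-(S.card * (ENNReal.ofReal P / m)).toReal)) ^ n := by
        gcongr
        exact ENNReal.one_sub_le_ofReal_exp_neg_toReal _
    _ = _ := by
        rw [← ENNReal.ofReal_pow (Real.exp_pos _).le, ← Real.exp_nat_mul]
        congr 2
        simp [ENNReal.toReal_ofReal hP]
        ring

/-- `n` balls are dropped independently into `m n` bins and one trash can; each
ball lands in the trash can with probability `1 - p n` and in each particular bin with
probability `p n / m n`.  `N₂` is the number of bins with at least one ball, and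
`p̃₂ = 1 - exp (- n * p n / m n)`.  For every `δ ∈ (0,1)` and all sufficiently large `n`,
`Pr (N₂ ≤ (1 - δ) * m n * p̃₂) ≤ 2 * exp (- δ² * m n * p̃₂ / 3)`. -/
theorem stmt_1 (δ : ℝ) (hδ0 : 0 < δ) (hδ1 : δ < 1) (m : ℕ → ℕ) (hm : ∀ n, 1 ≤ m n)
    (p : ℕ → ℝ) (hp0 : ∀ n, 0 < p n) (hp1 : ∀ n, p n ≤ 1) :
    ∃ n₀ : ℕ, ∀ n, n₀ ≤ n →
      (Measure.pi fun _ : Fin n =>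
          (@ballPMF (m n) ⟨Nat.one_le_iff_ne_zero.mp (hm n)⟩ (ENNReal.ofReal (p n))
            (ENNReal.ofReal_le_one.mpr (hp1 n))).toMeasure)
        {ω | ((Finset.univ.filter fun b : Fin (m n) => ∃ t, ω t = some b).card : ℝ) ≤
              (1 - δ) * (m n) * (1 - Real.exp (-((n : ℝ) * p n) / (m n)))}
        ≤ ENNReal.ofReal
            (2 * Real.exp
              (-δ ^ 2 * (m n) * (1 - Real.exp (-((n : ℝ) * p n) / (m n))) / 3)) := by
  refine ⟨0, fun n _ => ?_⟩
  have : NeZero (m n) := ⟨Nat.one_le_iff_ne_zero.mp (hm n)⟩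
  set q := 1 - Real.exp (-((n : ℝ) * p n) / (m n))
  have hq0 : 0 ≤ q := sub_nonneg.2 <| Real.exp_le_one_iff.2 <|
    div_nonpos_of_nonpos_of_nonneg (neg_nonpos.2 (mul_nonneg n.cast_nonneg (hp0 n).le))
      (m n).cast_nonneg
  have hq1 : q < 1 := sub_lt_self _ (Real.exp_pos _)
  have hoccupied (b : Fin (m n)) :
      MeasurableSet {ω : Fin n → Option (Fin (m n)) | ∃ t, ω t = some b} := by
    simp only [Set.ofPred_exists]
    exact MeasurableSet.iUnion fun t =>
      measurableSet_eq_fun (measurable_pi_apply t) measurable_const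
  have hchernoff := measure_card_mem_le_le_exp (μ := Measure.pi fun _ : Fin n =>
      (ballPMF (m n) (ENNReal.ofReal (p n)) (ENNReal.ofReal_le_one.mpr (hp1 n))).toMeasure)
    hoccupied hδ0.le hδ1 hq0 hq1 fun S => by
      rw [sub_sub_cancel]
      exact measure_pi_ballPMF_biInter_compl_le n (m n) (hp0 n).le _ S
  rw [Fintype.card_fin] at hchernoff
  refine hchernoff.trans (ENNReal.ofReal_le_ofReal ?_)
  have hexponent : 0 ≤ δ ^ 2 * (m n) * q := by positivity
  calc Real.exp (-(δ ^ 2 * (m n) * q / 2)) ≤ Real.exp (-δ ^ 2 * (m n) * q / 3) := by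
        gcongr
        linarith
    _ ≤ 2 * Real.exp (-δ ^ 2 * (m n) * q / 3) := by linarith [Real.exp_pos (-δ ^ 2 * (m n) * q / 3)]
end

section
/- There exists a constant c > 0 such that for every integer m ≥ 2 and every integer t ≥ c·m²·log m, the t-step transition probabilities P^t of the lazy random walk on the cycle ZMod m satisfy max_{i ∈ ZMod m} Σ_{j ∈ ZMod m} | P^t(i,j) − 1/m | ≤ 1/m⁴. -/
open MeasureTheory ProbabilityTheory
open scoped ENNReal

/-- The law of `t` i.i.d. increment symbols for the lazy random walk on a cycle, each uniform
on the three possibilities (`-1`, `0`, `+1`). -/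
noncomputable def cycleStepsMeasure (t : ℕ) : Measure (Fin t → Fin 3) :=
  (PMF.uniformOfFintype (Fin t → Fin 3)).toMeasure

/-- The `t`-step transition probability `P^t(i,j)` of the lazy random walk on the cycle
`ZMod m`: the probability that the walk started at `i`, whose increment encoded by the symbol
`s : Fin 3` is `(s : ZMod m) - 1 ∈ {-1, 0, +1}` (each with probability `1/3`), is at `j` after
`t` steps. -/
noncomputable def cycleTrans (m t : ℕ) (i j : ZMod m) : ℝ :=
  ((cycleStepsMeasure t)
    {ω | i + ∑ s : Fin t, (((ω s : ℕ) : ZMod m) - 1) = j}).toReal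

/-!
The position after `t` steps is `i` plus the sum of `t` i.i.d. increments, so Fourier analysis on
`ZMod m` writes `P^t(i, j) - 1/m` as the average, over the nontrivial frequencies `k`, of a
character times `λ_k ^ t`, where `λ_k = (1 + 2 cos (2πk/m)) / 3`. For `k ≠ 0` the quadratic bound
`cos x ≤ 1 - 2x²/π²` on `[-π, π]` gives `|λ_k| ≤ 1 - 1/m²`, hence
`|P^t(i, j) - 1/m| ≤ (1 - 1/m²)^t ≤ exp (-t/m²)`, which is at most `m⁻⁵` once `t ≥ 5 m² log m`.
-/

open Finset ZMod Real

lemma AddChar.map_sum_eq_prod {A M ι : Type*} [AddCommMonoid A] [CommMonoid M]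
    (ψ : AddChar A M) (s : Finset ι) (f : ι → A) :
    ψ (∑ i ∈ s, f i) = ∏ i ∈ s, ψ (f i) := by
  induction s using Finset.cons_induction with
  | empty => simp
  | cons a s ha ih => rw [sum_cons, prod_cons, map_add_eq_mul, ih]

section Fourier

variable {m : ℕ} [NeZero m] {α : Type*} [Fintype α]

theorem card_fiber_mul_eq_sum_stdAddChar (g : α → ZMod m) (t : ℕ) (a : ZMod m) :
    (#{ω : Fin t → α | ∑ s, g (ω s) = a} : ℂ) * m =
      ∑ k, stdAddChar (-(k * a)) * (∑ x, stdAddChar (k * g x)) ^ t := by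
  calc (#{ω : Fin t → α | ∑ s, g (ω s) = a} : ℂ) * m
      = ∑ ω : Fin t → α, ∑ k : ZMod m, stdAddChar (k * (∑ s, g (ω s) - a)) := by
        simp only [AddChar.sum_mulShift _ (isPrimitive_stdAddChar m), sub_eq_zero, ZMod.card]
        push_cast
        rw [sum_ite, sum_const_zero, add_zero, sum_const, nsmul_eq_mul]
    _ = ∑ k, stdAddChar (-(k * a)) * (∑ x, stdAddChar (k * g x)) ^ t := by
        rw [sum_comm]
        refine sum_congr rfl fun k _ ↦ ?_
        rw [Fintype.sum_pow, mul_sum]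
        refine sum_congr rfl fun ω _ ↦ ?_
        rw [← AddChar.map_sum_eq_prod, ← AddChar.map_add_eq_mul, mul_sub, mul_sum]
        congr 1
        ring

theorem abs_card_fiber_div_sub_inv_le [Nonempty α] (g : α → ZMod m) {ρ : ℝ} (hρ : 0 ≤ ρ)
    (hgap : ∀ k ≠ 0, ‖∑ x, stdAddChar (k * g x)‖ ≤ Fintype.card α * ρ) (t : ℕ) (a : ZMod m) :
    |(#{ω : Fin t → α | ∑ s, g (ω s) = a} : ℝ) / Fintype.card α ^ t - 1 / m| ≤ ρ ^ t := by
  set n := Fintype.card α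
  set E : ℂ := ∑ k ∈ univ.erase 0, stdAddChar (-(k * a)) * (∑ x, stdAddChar (k * g x)) ^ t
  have hn : (0 : ℝ) < n := Nat.cast_pos.2 Fintype.card_pos
  have hm : (0 : ℝ) < m := Nat.cast_pos.2 (NeZero.pos m)
  have hsplit : (#{ω : Fin t → α | ∑ s, g (ω s) = a} : ℂ) * m = (n : ℂ) ^ t + E := by
    rw [card_fiber_mul_eq_sum_stdAddChar, ← add_sum_erase _ _ (mem_univ (0 : ZMod m))]
    congr 1
    simp [n]
  have hE : ‖E‖ ≤ m * (n * ρ) ^ t := by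
    refine (norm_sum_le _ _).trans <| (sum_le_card_nsmul _ _ ((n * ρ) ^ t) fun k hk ↦ ?_).trans ?_
    · rw [norm_mul, norm_pow, stdAddChar_apply, Circle.norm_coe, one_mul]
      exact pow_le_pow_left₀ (norm_nonneg _) (hgap k (ne_of_mem_erase hk)) t
    · rw [nsmul_eq_mul]
      gcongr
      exact_mod_cast (card_erase_le).trans (card_univ.trans (ZMod.card m)).le
  have hdiff : (((#{ω : Fin t → α | ∑ s, g (ω s) = a} : ℝ) / (n : ℝ) ^ t - 1 / m : ℝ) : ℂ)
      = E / (m * n ^ t) := by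
    have : (n : ℂ) ≠ 0 := by exact_mod_cast hn.ne'
    have : (m : ℂ) ≠ 0 := by exact_mod_cast hm.ne'
    push_cast
    field_simp
    linear_combination hsplit
  rw [← Real.norm_eq_abs, ← Complex.norm_real, hdiff, norm_div, div_le_iff₀ (by simp [hn, hm])]
  calc ‖E‖ ≤ m * (n * ρ) ^ t := hE
    _ = ρ ^ t * ‖(m * n ^ t : ℂ)‖ := by
      rw [norm_mul, norm_pow, Complex.norm_natCast, Complex.norm_natCast, mul_pow]; ring

end Fourier

lemma cycleTrans_eq_card_div (m t : ℕ) (i j : ZMod m) :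
    cycleTrans m t i j =
      #{ω : Fin t → Fin 3 | ∑ s, (((ω s : ℕ) : ZMod m) - 1) = j - i} / 3 ^ t := by
  rw [cycleTrans, cycleStepsMeasure, PMF.toMeasure_uniformOfFintype_apply _ (.of_discrete),
    Fintype.card_subtype, ENNReal.toReal_div]
  simp [eq_sub_iff_add_eq', Fintype.card_fin]

-- The representative `k.valMinAbs ∈ (-m/2, m/2]` keeps the angle in `[-π, π]`.
lemma sum_stdAddChar_lazyStep {m : ℕ} [NeZero m] (k : ZMod m) :
    ∑ x : Fin 3, stdAddChar (k * (((x : ℕ) : ZMod m) - 1)) =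
      ((1 + 2 * cos (2 * π * k.valMinAbs / m) : ℝ) : ℂ) := by
  have hψ (j : ℤ) : (stdAddChar (j : ZMod m) : ℂ) = Complex.exp (2 * π * j / m * Complex.I) := by
    rw [stdAddChar_coe]; ring_nf
  rw [Fin.sum_univ_three]
  norm_num
  conv_lhs => rw [← k.coe_valMinAbs, ← Int.cast_neg, hψ, hψ]
  push_cast
  rw [Complex.two_cos]
  ring_nf

lemma cos_two_pi_mul_div_le {v : ℤ} {m : ℝ} (hv : v ≠ 0) (hvm : 2 * |(v : ℝ)| ≤ m) :
    cos (2 * π * v / m) ≤ 1 - 8 / m ^ 2 := by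
  have hm : 0 < m := by
    have : (0 : ℝ) < |(v : ℝ)| := abs_pos.2 (Int.cast_ne_zero.2 hv)
    linarith
  have hv1 : 1 ≤ (v : ℝ) ^ 2 := by
    rw [← sq_abs]
    exact one_le_pow₀ (by exact_mod_cast Int.one_le_abs hv)
  have hx : |2 * π * v / m| ≤ π := by
    rw [abs_div, abs_mul, abs_of_pos (by positivity : 0 < 2 * π), abs_of_pos hm, div_le_iff₀ hm]
    nlinarith [pi_pos]
  calc cos (2 * π * v / m) ≤ 1 - 2 / π ^ 2 * (2 * π * v / m) ^ 2 := cos_le_one_sub_mul_cos_sq hx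
    _ = 1 - 8 * v ^ 2 / m ^ 2 := by field_simp; ring
    _ ≤ 1 - 8 / m ^ 2 := by gcongr; linarith

lemma norm_sum_stdAddChar_lazyStep_le {m : ℕ} [NeZero m] {k : ZMod m} (hk : k ≠ 0) :
    ‖∑ x : Fin 3, stdAddChar (k * (((x : ℕ) : ZMod m) - 1))‖ ≤
      Fintype.card (Fin 3) * (1 - 1 / (m : ℝ) ^ 2) := by
  have hv : k.valMinAbs ≠ 0 := (valMinAbs_eq_zero k).not.2 hk
  have hvm : 2 * |k.valMinAbs| ≤ m := by
    have := k.valMinAbs_mem_Ioc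
    rcases abs_cases k.valMinAbs with ⟨h, -⟩ | ⟨h, -⟩ <;> rw [Set.mem_Ioc] at this <;> omega
  have hcos := cos_two_pi_mul_div_le (m := m) hv (by exact_mod_cast hvm)
  have hinv : 0 ≤ 1 / (m : ℝ) ^ 2 := by positivity
  rw [div_eq_mul_one_div 8] at hcos
  rw [sum_stdAddChar_lazyStep, Complex.norm_real, Real.norm_eq_abs, Fintype.card_fin,
    Nat.cast_ofNat, abs_le]
  constructor <;> linarith [neg_one_le_cos (2 * π * k.valMinAbs / m)]

lemma one_sub_one_div_sq_nonneg {m : ℝ} (hm : 1 ≤ m) : 0 ≤ 1 - 1 / m ^ 2 := by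
  rw [sub_nonneg, div_le_one (by positivity)]
  nlinarith

lemma mul_one_sub_one_div_sq_pow_le {m : ℝ} (hm : 1 ≤ m) {t : ℕ} (ht : 5 * m ^ 2 * log m ≤ t) :
    m * (1 - 1 / m ^ 2) ^ t ≤ 1 / m ^ 4 := by
  have hm0 : 0 < m := by linarith
  calc m * (1 - 1 / m ^ 2) ^ t ≤ m * exp (-(1 / m ^ 2)) ^ t := by
        gcongr
        · exact one_sub_one_div_sq_nonneg hm
        · linarith [add_one_le_exp (-(1 / m ^ 2))]
    _ = m * exp (-(t / m ^ 2)) := by rw [← exp_nat_mul]; ring_nf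
    _ ≤ m * exp (-(5 * log m)) := by
        gcongr
        rwa [le_div_iff₀ (by positivity), mul_right_comm]
    _ = 1 / m ^ 4 := by
        rw [exp_neg, ← log_rpow hm0, exp_log (by positivity)]
        norm_num
        field_simp

/-- There is a constant `c > 0` such that for every `m ≥ 2` and every
`t ≥ c * m² * log m`, the `t`-step transition probabilities of the lazy random walk on the
cycle `ZMod m` satisfy `max_i ∑_j |P^t(i,j) - 1/m| ≤ 1/m⁴`. -/
theorem stmt_3 :
    ∃ c : ℝ, 0 < c ∧
      ∀ (m : ℕ) [NeZero m], 2 ≤ m → ∀ t : ℕ, c * m ^ 2 * Real.log m ≤ t →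
        ∀ i : ZMod m, ∑ j : ZMod m, |cycleTrans m t i j - 1 / m| ≤ 1 / (m : ℝ) ^ 4 := by
  refine ⟨5, by norm_num, fun m _ hm t ht i ↦ ?_⟩
  have hm1 : (1 : ℝ) ≤ m := by exact_mod_cast one_le_two.trans hm
  calc ∑ j : ZMod m, |cycleTrans m t i j - 1 / m|
      ≤ ∑ _j : ZMod m, (1 - 1 / (m : ℝ) ^ 2) ^ t := by
        refine sum_le_sum fun j _ ↦ ?_
        rw [cycleTrans_eq_card_div]
        simpa using abs_card_fiber_div_sub_inv_le (fun x : Fin 3 ↦ ((x : ℕ) : ZMod m) - 1)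
          (one_sub_one_div_sq_nonneg hm1) (fun k hk ↦ norm_sum_stdAddChar_lazyStep_le hk) t (j - i)
    _ = m * (1 - 1 / (m : ℝ) ^ 2) ^ t := by simp
    _ ≤ 1 / (m : ℝ) ^ 4 := mul_one_sub_one_div_sq_pow_le hm1 ht
end
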